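/- Let $(X, Y)$ be jointly zero-mean circularly-symmetric complex Gaussian, with polar coordinates $X = R_X e^{i\Phi_X}$, $Y = R_Y e^{i\Phi_Y}$. Then $I(R_X; Y) = I(R_X; (R_Y, \Phi_Y)) = I(R_X; R_Y)$; that is, given only the envelope of $X$, the full complex observation $Y$ carries no more information than its envelope $R_Y$. -/

import Mathlib

open MeasureTheory ProbabilityTheory Real

/-- Mutual information (in bits) between `X` and `Y` under `μ`, defined as the
integral, w.r.t. the joint law, of the base-2 logarithm of the Radon–Nikodym
derivative of the joint law with respect to the product of the marginal laws. -/
noncomputable def mutualInfo {Ω α β : Type*} [MeasurableSpace Ω] [MeasurableSpace α]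
    [MeasurableSpace β] (μ : Measure Ω) (X : Ω → α) (Y : Ω → β) : ℝ :=
  ∫ z, Real.logb 2 (((Measure.map (fun ω => (X ω, Y ω)) μ).rnDeriv
      ((Measure.map X μ).prod (Measure.map Y μ)) z).toReal)
    ∂(Measure.map (fun ω => (X ω, Y ω)) μ)

/-- Density (w.r.t. Lebesgue measure on `ℂ × ℂ`) of a jointly zero-mean
circularly-symmetric complex Gaussian pair with covariance `[[a, c], [c̄, b]]`. -/
noncomputable def cscgPairDensity (a b : ℝ) (c : ℂ) (z : ℂ × ℂ) : ℝ :=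
  (1 / (Real.pi ^ 2 * (a * b - ‖c‖ ^ 2))) *
    Real.exp (-(b * ‖z.1‖ ^ 2 + a * ‖z.2‖ ^ 2
        - 2 * ((starRingEnd ℂ) c * z.1 * (starRingEnd ℂ) z.2).re)
      / (a * b - ‖c‖ ^ 2))

/-!
Rotating `X` and `Y` by a common phase preserves their joint law. Hence the law of `(R_X, Y)`
and the product of its marginals are both invariant under rotations of `Y`, and averaging over
the circle group turns their Radon–Nikodym derivative into a rotation-invariant version of it,
i.e. a function of `(R_X, R_Y)`. So `R_Y`, and a fortiori `(R_Y, Φ_Y)`, is a sufficient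
statistic of `Y` for `R_X`; since mutual information is the expected logarithm of that
derivative, it does not change when `Y` is replaced by either.
-/

open scoped ENNReal

noncomputable instance : MeasurableSpace Circle :=
  inferInstanceAs (MeasurableSpace (Metric.sphere (0 : ℂ) 1))

instance : BorelSpace Circle := inferInstanceAs (BorelSpace (Metric.sphere (0 : ℂ) 1))

section Measures

variable {α β : Type*} [MeasurableSpace α] [MeasurableSpace β]

lemma map_withDensity_comp (μ : Measure α) {T : α → β} (hT : Measurable T) {g : β → ℝ≥0∞}
    (hg : Measurable g) :
    (μ.withDensity (fun x => g (T x))).map T = (μ.map T).withDensity g := by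
  ext s hs
  rw [Measure.map_apply hT hs, withDensity_apply _ hs, withDensity_apply _ (hT hs),
    setLIntegral_map hs hg hT]

lemma map_withDensity_of_measurePreserving {μ : Measure α} {T : α → α}
    (hT : MeasurePreserving T μ μ) {g : α → ℝ≥0∞} (hg : Measurable g) (hgT : ∀ x, g (T x) = g x) :
    (μ.withDensity g).map T = μ.withDensity g := by
  conv_lhs => rw [← funext hgT]
  rw [map_withDensity_comp μ hT.measurable hg, hT.map_eq]

lemma rnDeriv_comp_ae_eq_of_map_eq {J P : Measure α} [SigmaFinite J] [SigmaFinite P] {T : α → α}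
    (hT : MeasurableEmbedding T) (hJ : J.map T = J) (hP : P.map T = P) :
    (fun x => J.rnDeriv P (T x)) =ᵐ[P] J.rnDeriv P := by
  simpa only [hJ, hP] using hT.rnDeriv_map J P

lemma absolutelyContinuous_map_fst_prod_map_snd {ρ : Measure (α × β)} [IsFiniteMeasure ρ]
    {μ : Measure α} {ν : Measure β} [SFinite μ] [SFinite ν] (hμ : μ ≠ 0) (hν : ν ≠ 0)
    (hρ : ρ ≪ μ.prod ν) (hρ' : μ.prod ν ≪ ρ) :
    ρ ≪ (ρ.map Prod.fst).prod (ρ.map Prod.snd) := by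
  have hfst : μ ≪ ρ.map Prod.fst := by
    refine (Measure.absolutelyContinuous_smul (Measure.measure_univ_ne_zero.2 hν)).trans ?_
    simpa only [Measure.map_fst_prod] using hρ'.map measurable_fst
  have hsnd : ν ≪ ρ.map Prod.snd := by
    refine (Measure.absolutelyContinuous_smul (Measure.measure_univ_ne_zero.2 hμ)).trans ?_
    simpa only [Measure.map_snd_prod] using hρ'.map measurable_snd
  exact hρ.trans (hfst.prod hsnd)

end Measures

section MutualInfo

variable {Ω β γ δ : Type*} [MeasurableSpace Ω] [MeasurableSpace β] [MeasurableSpace γ]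
  [MeasurableSpace δ] {μ : Measure Ω} [IsFiniteMeasure μ]

lemma mutualInfo_eq_integral_of_map_eq_withDensity {X : Ω → β} {Y : Ω → γ}
    {k : β × γ → ℝ≥0∞} (hk : Measurable k)
    (h : μ.map (fun ω => (X ω, Y ω)) = ((μ.map X).prod (μ.map Y)).withDensity k) :
    mutualInfo μ X Y = ∫ z, Real.logb 2 (k z).toReal ∂(μ.map fun ω => (X ω, Y ω)) := by
  have hac : μ.map (fun ω => (X ω, Y ω)) ≪ (μ.map X).prod (μ.map Y) :=
    h ▸ withDensity_absolutelyContinuous _ _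
  have hrn := Measure.rnDeriv_withDensity ((μ.map X).prod (μ.map Y)) hk
  rw [← h] at hrn
  refine integral_congr_ae ?_
  filter_upwards [hac.ae_eq hrn] with z hz
  rw [hz]

/-- `e ∘ Y` is a sufficient statistic of `Y` for `X`. -/
lemma mutualInfo_comp_right_of_map_eq_withDensity {X : Ω → β} {Y : Ω → γ} (hX : Measurable X)
    (hY : Measurable Y) {e : γ → δ} (he : Measurable e) {k : β × δ → ℝ≥0∞} (hk : Measurable k)
    (h : μ.map (fun ω => (X ω, Y ω))
      = ((μ.map X).prod (μ.map Y)).withDensity (fun z => k (z.1, e z.2))) :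
    mutualInfo μ X (fun ω => e (Y ω)) = mutualInfo μ X Y := by
  have hπ : Measurable (Prod.map id e : β × γ → β × δ) := measurable_id.prodMap he
  have hlaw : μ.map (fun ω => (X ω, e (Y ω)))
      = (μ.map fun ω => (X ω, Y ω)).map (Prod.map id e) := by
    rw [Measure.map_map hπ (hX.prodMk hY)]; rfl
  have hmarg : (μ.map X).prod (μ.map fun ω => e (Y ω))
      = ((μ.map X).prod (μ.map Y)).map (Prod.map id e) := by
    rw [← Measure.map_prod_map _ _ measurable_id he, Measure.map_id, Measure.map_map he hY]; rfl
  have h' : μ.map (fun ω => (X ω, e (Y ω)))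
      = ((μ.map X).prod (μ.map fun ω => e (Y ω))).withDensity k := by
    rw [hlaw, hmarg, h]
    exact map_withDensity_comp _ hπ hk
  have hlogb : Measurable fun t : ℝ≥0∞ => Real.logb 2 t.toReal :=
    (Real.measurable_log.div_const _).comp ENNReal.measurable_toReal
  rw [mutualInfo_eq_integral_of_map_eq_withDensity hk h',
    mutualInfo_eq_integral_of_map_eq_withDensity (hk.comp hπ) h, hlaw,
    integral_map (f := fun z => Real.logb 2 (k z).toReal) hπ.aemeasurable
      (hlogb.comp hk).aestronglyMeasurable]
  rfl

end MutualInfo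

section PhaseAveraging

variable {α : Type*}

noncomputable def phaseAverage (f : α × ℂ → ℝ≥0∞) (z : α × ℂ) : ℝ≥0∞ :=
  ∫⁻ u : Circle, f (z.1, u • z.2) ∂Measure.haar

lemma phaseAverage_smul (f : α × ℂ → ℝ≥0∞) (z : α × ℂ) (v : Circle) :
    phaseAverage f (z.1, v • z.2) = phaseAverage f z := by
  simp only [phaseAverage, smul_smul]
  exact lintegral_mul_right_eq_self (fun u => f (z.1, u • z.2)) v

lemma phaseAverage_eq_norm (f : α × ℂ → ℝ≥0∞) (z : α × ℂ) :
    phaseAverage f (z.1, (‖z.2‖ : ℂ)) = phaseAverage f z := by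
  obtain ⟨x, y⟩ := z
  have hpolar : Circle.exp (Complex.arg y) • (‖y‖ : ℂ) = y := by
    rw [Circle.smul_def, Circle.coe_exp, smul_eq_mul, mul_comm, Complex.norm_mul_exp_arg_mul_I]
  conv_rhs => rw [← hpolar]
  exact (phaseAverage_smul f (x, (‖y‖ : ℂ)) _).symm

variable [MeasurableSpace α]

lemma measurable_rotateSnd : Measurable fun q : Circle × (α × ℂ) => (q.2.1, q.1 • q.2.2) :=
  measurable_snd.fst.prodMk (measurable_fst.smul measurable_snd.snd)

lemma Measurable.phaseAverage {f : α × ℂ → ℝ≥0∞} (hf : Measurable f) :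
    Measurable (phaseAverage f) :=
  (hf.comp measurable_rotateSnd).lintegral_prod_left'

lemma phaseAverage_ae_eq {P : Measure (α × ℂ)} [SFinite P] {f : α × ℂ → ℝ≥0∞}
    (hf : Measurable f) (hinv : ∀ u : Circle, (fun z => f (z.1, u • z.2)) =ᵐ[P] f) :
    phaseAverage f =ᵐ[P] fun z => f z * Measure.haar (Set.univ : Set Circle) := by
  have hae : ∀ᵐ z ∂P, ∀ᵐ u ∂(Measure.haar : Measure Circle), f (z.1, u • z.2) = f z :=
    (Measure.ae_ae_comm (p := fun u z => f (z.1, u • z.2) = f z)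
      (measurableSet_eq_fun (hf.comp measurable_rotateSnd) (hf.comp measurable_snd))).1
      (ae_of_all _ hinv)
  filter_upwards [hae] with z hz
  rw [phaseAverage, lintegral_congr_ae hz, lintegral_const]

/-- The phase average of the Radon–Nikodym derivative is a rotation-invariant version of it. -/
lemma exists_rnDeriv_ae_eq_comp_norm {J P : Measure (α × ℂ)} [SigmaFinite J] [SigmaFinite P]
    (hJ : ∀ u : Circle, J.map (Prod.map id (u • ·)) = J)
    (hP : ∀ u : Circle, P.map (Prod.map id (u • ·)) = P) :
    ∃ k : α × ℝ → ℝ≥0∞, Measurable k ∧ J.rnDeriv P =ᵐ[P] fun z => k (z.1, ‖z.2‖) := by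
  have hf := Measure.measurable_rnDeriv J P
  have hinv (u : Circle) : (fun z => J.rnDeriv P (z.1, u • z.2)) =ᵐ[P] J.rnDeriv P :=
    rnDeriv_comp_ae_eq_of_map_eq (MeasurableEmbedding.id.prodMap
      (measurableEmbedding_const_smul u)) (hJ u) (hP u)
  set c := (Measure.haar : Measure Circle) Set.univ
  have hc0 : c ≠ 0 := (Measure.measure_univ_pos.2 (NeZero.ne _)).ne'
  refine ⟨fun w => phaseAverage (J.rnDeriv P) (w.1, (w.2 : ℂ)) * c⁻¹,
    (hf.phaseAverage.comp (measurable_fst.prodMk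
      (Complex.measurable_ofReal.comp measurable_snd))).mul_const _, ?_⟩
  filter_upwards [phaseAverage_ae_eq hf hinv] with z hz
  rw [phaseAverage_eq_norm, hz, mul_assoc, ENNReal.mul_inv_cancel hc0 (measure_ne_top _ _),
    mul_one]

end PhaseAveraging

section CircularSymmetry

/-- `u • (x, y) = (u x, u y)`: both coordinates are rotated by the same phase. -/
def IsCircularlySymmetric (ρ : Measure (ℂ × ℂ)) : Prop :=
  ∀ u : Circle, ρ.map (u • ·) = ρ

namespace IsCircularlySymmetric

variable {ρ : Measure (ℂ × ℂ)}

lemma map_snd (hρ : IsCircularlySymmetric ρ) (u : Circle) :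
    (ρ.map Prod.snd).map (u • ·) = ρ.map Prod.snd := by
  conv_rhs => rw [← hρ u]
  rw [Measure.map_map (measurable_const_smul u) measurable_snd,
    Measure.map_map measurable_snd (measurable_const_smul u)]
  rfl

lemma map_norm_fst (hρ : IsCircularlySymmetric ρ) (u : Circle) :
    (ρ.map (Prod.map (‖·‖) id)).map (Prod.map id (u • ·)) = ρ.map (Prod.map (‖·‖) id) := by
  have hN : Measurable (Prod.map (‖·‖) id : ℂ × ℂ → ℝ × ℂ) := measurable_norm.prodMap measurable_id
  have hcomm : Prod.map id (u • ·) ∘ Prod.map (‖·‖) id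
      = Prod.map (‖·‖) id ∘ (u • · : ℂ × ℂ → ℂ × ℂ) := by
    funext z
    simp only [Function.comp_apply, Prod.map, Prod.smul_fst, Prod.smul_snd, id, Circle.smul_def,
      smul_eq_mul, norm_mul, Circle.norm_coe, one_mul]
  conv_rhs => rw [← hρ u]
  rw [Measure.map_map (measurable_id.prodMap (measurable_const_smul u)) hN, hcomm,
    Measure.map_map hN (measurable_const_smul u)]

end IsCircularlySymmetric

variable {a b : ℝ} {c : ℂ}

lemma cscgPairDensity_smul (u : Circle) (z : ℂ × ℂ) :
    cscgPairDensity a b c (u • z) = cscgPairDensity a b c z := by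
  have hu : (u : ℂ) * (starRingEnd ℂ) u = 1 := by
    rw [Complex.mul_conj, Complex.normSq_eq_norm_sq, Circle.norm_coe, one_pow, Complex.ofReal_one]
  have hcross : (starRingEnd ℂ) c * (u * z.1) * (starRingEnd ℂ) (u * z.2)
      = (starRingEnd ℂ) c * z.1 * (starRingEnd ℂ) z.2 := by
    rw [map_mul]
    linear_combination ((starRingEnd ℂ) c * z.1 * (starRingEnd ℂ) z.2) * hu
  simp only [cscgPairDensity, Prod.smul_fst, Prod.smul_snd, Circle.smul_def, smul_eq_mul,
    norm_mul, Circle.norm_coe, one_mul, hcross]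

lemma cscgPairDensity_pos (hD : ‖c‖ ^ 2 < a * b) (z : ℂ × ℂ) : 0 < cscgPairDensity a b c z := by
  have h : 0 < a * b - ‖c‖ ^ 2 := sub_pos.2 hD
  unfold cscgPairDensity
  positivity

lemma measurable_cscgPairDensity (a b : ℝ) (c : ℂ) : Measurable (cscgPairDensity a b c) := by
  unfold cscgPairDensity
  fun_prop

lemma measurePreserving_circle_smul (u : Circle) :
    MeasurePreserving (u • · : ℂ × ℂ → ℂ × ℂ) volume volume := by
  have hrot : MeasurePreserving (u • · : ℂ → ℂ) volume volume := by
    have he : ⇑(rotation u) = (u • · : ℂ → ℂ) :=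
      funext fun z => by rw [rotation_apply, Circle.smul_def, smul_eq_mul]
    exact he ▸ (rotation u).measurePreserving
  exact hrot.prod hrot

lemma isCircularlySymmetric_withDensity_cscgPairDensity (a b : ℝ) (c : ℂ) :
    IsCircularlySymmetric
      (volume.withDensity fun z => ENNReal.ofReal (cscgPairDensity a b c z)) := fun u =>
  map_withDensity_of_measurePreserving (measurePreserving_circle_smul u)
    (measurable_cscgPairDensity a b c).ennreal_ofReal
    (fun z => by rw [cscgPairDensity_smul])

end CircularSymmetry

section Envelope

variable {Ω : Type*} [MeasurableSpace Ω] {μ : Measure Ω} [IsFiniteMeasure μ] {X Y : Ω → ℂ}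

lemma map_absolutelyContinuous_prod_of_map_eq_withDensity_cscg (hX : Measurable X)
    (hY : Measurable Y) {a b : ℝ} {c : ℂ} (hD : ‖c‖ ^ 2 < a * b)
    (hlaw : μ.map (fun ω => (X ω, Y ω))
      = volume.withDensity (fun z => ENNReal.ofReal (cscgPairDensity a b c z))) :
    μ.map (fun ω => (X ω, Y ω)) ≪ (μ.map X).prod (μ.map Y) := by
  have hac := absolutelyContinuous_map_fst_prod_map_snd (ρ := μ.map fun ω => (X ω, Y ω))
    (NeZero.ne (volume : Measure ℂ)) (NeZero.ne (volume : Measure ℂ))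
    (hlaw ▸ withDensity_absolutelyContinuous _ _)
    (hlaw ▸ withDensity_absolutelyContinuous'
      (measurable_cscgPairDensity a b c).ennreal_ofReal.aemeasurable
      (ae_of_all _ fun z => (ENNReal.ofReal_pos.2 (cscgPairDensity_pos hD z)).ne'))
  rwa [Measure.map_map measurable_fst (hX.prodMk hY),
    Measure.map_map measurable_snd (hX.prodMk hY)] at hac

lemma exists_map_norm_eq_withDensity (hX : Measurable X) (hY : Measurable Y)
    (hρ : IsCircularlySymmetric (μ.map fun ω => (X ω, Y ω)))
    (hac : μ.map (fun ω => (X ω, Y ω)) ≪ (μ.map X).prod (μ.map Y)) :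
    ∃ k : ℝ × ℝ → ℝ≥0∞, Measurable k ∧ μ.map (fun ω => (‖X ω‖, Y ω))
      = ((μ.map fun ω => ‖X ω‖).prod (μ.map Y)).withDensity (fun z => k (z.1, ‖z.2‖)) := by
  have hN : Measurable (Prod.map (‖·‖) id : ℂ × ℂ → ℝ × ℂ) := measurable_norm.prodMap measurable_id
  have hJ : μ.map (fun ω => (‖X ω‖, Y ω))
      = (μ.map fun ω => (X ω, Y ω)).map (Prod.map (‖·‖) id) := by
    rw [Measure.map_map hN (hX.prodMk hY)]; rfl
  have hP : (μ.map fun ω => ‖X ω‖).prod (μ.map Y)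
      = ((μ.map X).prod (μ.map Y)).map (Prod.map (‖·‖) id) := by
    rw [← Measure.map_prod_map _ _ measurable_norm measurable_id, Measure.map_id,
      Measure.map_map measurable_norm hX]; rfl
  have hPinv (u : Circle) : ((μ.map fun ω => ‖X ω‖).prod (μ.map Y)).map (Prod.map id (u • ·))
      = (μ.map fun ω => ‖X ω‖).prod (μ.map Y) := by
    have hYmarg : μ.map Y = (μ.map fun ω => (X ω, Y ω)).map Prod.snd := by
      rw [Measure.map_map measurable_snd (hX.prodMk hY)]; rfl
    rw [← Measure.map_prod_map _ _ measurable_id (measurable_const_smul u), Measure.map_id,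
      hYmarg, hρ.map_snd u]
  have hJinv (u : Circle) : (μ.map fun ω => (‖X ω‖, Y ω)).map (Prod.map id (u • ·))
      = μ.map fun ω => (‖X ω‖, Y ω) := by
    rw [hJ, hρ.map_norm_fst u]
  obtain ⟨k, hk, hrn⟩ := exists_rnDeriv_ae_eq_comp_norm hJinv hPinv
  have hJP : μ.map (fun ω => (‖X ω‖, Y ω)) ≪ (μ.map fun ω => ‖X ω‖).prod (μ.map Y) :=
    hJ ▸ hP ▸ hac.map hN
  exact ⟨k, hk, (Measure.withDensity_rnDeriv_eq _ _ hJP).symm.trans (withDensity_congr_ae hrn)⟩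

end Envelope

theorem stmt_12_general {Ω : Type*} [MeasurableSpace Ω] (μ : Measure Ω) [IsProbabilityMeasure μ]
    (X Y : Ω → ℂ) (hX : Measurable X) (hY : Measurable Y)
    (a b : ℝ) (c : ℂ) (hD : ‖c‖ ^ 2 < a * b)
    (hlaw : Measure.map (fun ω => (X ω, Y ω)) μ
      = volume.withDensity (fun z => ENNReal.ofReal (cscgPairDensity a b c z))) :
    mutualInfo μ (fun ω => ‖X ω‖) Y
        = mutualInfo μ (fun ω => ‖X ω‖)
            (fun ω => (‖Y ω‖, Complex.arg (Y ω)))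
    ∧ mutualInfo μ (fun ω => ‖X ω‖) Y
        = mutualInfo μ (fun ω => ‖X ω‖) (fun ω => ‖Y ω‖) := by
  have hρ : IsCircularlySymmetric (μ.map fun ω => (X ω, Y ω)) :=
    hlaw ▸ isCircularlySymmetric_withDensity_cscgPairDensity a b c
  obtain ⟨k, hk, hdens⟩ := exists_map_norm_eq_withDensity hX hY hρ
    (map_absolutelyContinuous_prod_of_map_eq_withDensity_cscg hX hY hD hlaw)
  have hRX : Measurable fun ω => ‖X ω‖ := measurable_norm.comp hX
  exact ⟨(mutualInfo_comp_right_of_map_eq_withDensity hRX hY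
      (measurable_norm.prodMk Complex.measurable_arg)
      (k := fun q => k (q.1, q.2.1)) (hk.comp (measurable_fst.prodMk measurable_snd.fst))
      hdens).symm,
    (mutualInfo_comp_right_of_map_eq_withDensity hRX hY measurable_norm hk hdens).symm⟩

theorem stmt_12 {Ω : Type*} [MeasurableSpace Ω] (μ : Measure Ω) [IsProbabilityMeasure μ]
    (X Y : Ω → ℂ) (hX : Measurable X) (hY : Measurable Y)
    (a b : ℝ) (c : ℂ) (ha : 0 < a) (hb : 0 < b) (hD : ‖c‖ ^ 2 < a * b)
    (hlaw : Measure.map (fun ω => (X ω, Y ω)) μ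
      = volume.withDensity (fun z => ENNReal.ofReal (cscgPairDensity a b c z))) :
    mutualInfo μ (fun ω => ‖X ω‖) Y
        = mutualInfo μ (fun ω => ‖X ω‖)
            (fun ω => (‖Y ω‖, Complex.arg (Y ω)))
    ∧ mutualInfo μ (fun ω => ‖X ω‖) Y
        = mutualInfo μ (fun ω => ‖X ω‖) (fun ω => ‖Y ω‖) :=
  stmt_12_general μ X Y hX hY a b c hD hlaw
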